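/- arXiv:0903.0472 — 2 statements merged into one kernel-verified Lean document; each statement's English description precedes it below -/
import Mathlib

section
/- For a generic length-vector ℓ ∈ ℝ_{>0}^n and d ≥ 2, the chain space Ch_d^n(ℓ) is a smooth closed manifold of dimension (n−2)(d−1)−1. -/
noncomputable section ChainSpaces

open scoped BigOperators

/-! ### Basic geometric definitions: chain spaces, length vectors, short/long subsets -/

/-- The first standard basis vector `e₁` of `ℝ^d`. -/
def e1 (d : ℕ) : EuclideanSpace ℝ (Fin d) :=
  WithLp.toLp 2 (fun j => if (j : ℕ) = 0 then 1 else 0)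

/-- A length vector is positive. -/
def LengthVectorPos {m : ℕ} (ℓ : Fin m → ℝ) : Prop := ∀ i, 0 < ℓ i

/-- `J ⊆ {1,…,m}` is `ℓ`-short. -/
def IsShort {m : ℕ} (ℓ : Fin m → ℝ) (J : Finset (Fin m)) : Prop :=
  ∑ i ∈ J, ℓ i < ∑ i ∈ Jᶜ, ℓ i

/-- `J ⊆ {1,…,m}` is `ℓ`-long. -/
def IsLong {m : ℕ} (ℓ : Fin m → ℝ) (J : Finset (Fin m)) : Prop :=
  ∑ i ∈ Jᶜ, ℓ i < ∑ i ∈ J, ℓ i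

/-- `ℓ` is generic: no subset has exactly half of the total length. -/
def IsGeneric {m : ℕ} (ℓ : Fin m → ℝ) : Prop :=
  ∀ J : Finset (Fin m), ∑ i ∈ J, ℓ i ≠ ∑ i ∈ Jᶜ, ℓ i

/-- `ℓ = (ℓ₁,…,ℓ_n)` is dominated: the last entry is maximal.
(Here the length vector is indexed by `Fin (n+1)`, so the paper's `n` is `n+1`.) -/
def IsDominated {n : ℕ} (ℓ : Fin (n + 1) → ℝ) : Prop :=
  ∀ i, ℓ i ≤ ℓ (Fin.last n)

/-- The chain space `Ch_d^{n+1}(ℓ) ⊆ (S^{d-1})^n` of configurations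
`z` of unit vectors with `∑_{i=1}^{n} ℓᵢ zᵢ = ℓ_{n+1} e₁`.
(The paper's `n` is our `n+1`: there are `n` moving segments.) -/
def chainSpace (d n : ℕ) (ℓ : Fin (n + 1) → ℝ) :
    Set (Fin n → EuclideanSpace ℝ (Fin d)) :=
  {z | (∀ i, ‖z i‖ = 1) ∧
       ∑ i : Fin n, ℓ i.castSucc • z i = ℓ (Fin.last n) • e1 d}

/-- The space `Z = Z_d^{n+1} = {ρ : {1,…,n+1} → S^{d-1} ∣ ρ(n+1) = -e₁}`. -/
def Zspace (d n : ℕ) : Set (Fin (n + 1) → EuclideanSpace ℝ (Fin d)) :=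
  {ρ | (∀ i, ‖ρ i‖ = 1) ∧ ρ (Fin.last n) = -(e1 d)}

/-- The chain space viewed inside `Z`: configurations `ρ ∈ Z` with `∑ ℓᵢ ρ(i) = 0`. -/
def chainInZ (d n : ℕ) (ℓ : Fin (n + 1) → ℝ) :
    Set (Fin (n + 1) → EuclideanSpace ℝ (Fin d)) :=
  {ρ ∈ Zspace d n | ∑ i, ℓ i • ρ i = 0}

/-- `Z' = Z ∖ Ch_d^{n+1}(ℓ)`. -/
def Zprime (d n : ℕ) (ℓ : Fin (n + 1) → ℝ) :
    Set (Fin (n + 1) → EuclideanSpace ℝ (Fin d)) :=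
  Zspace d n \ chainInZ d n ℓ

/-- The submanifold `W_J = {ρ ∈ Z ∣ ρ is constant on J}`. -/
def Wsub (d n : ℕ) (J : Finset (Fin (n + 1))) :
    Set (Fin (n + 1) → EuclideanSpace ℝ (Fin d)) :=
  {ρ ∈ Zspace d n | ∀ i ∈ J, ∀ j ∈ J, ρ i = ρ j}

/-- The lined configuration `ρ_J ∈ Z` (taking the value `κ_J(i)e₁` if `n ∈ J` and
`-κ_J(i)e₁` if `n ∉ J`, where `κ_J = -1` on `J` and `1` off `J`). -/
def rhoConfig (d n : ℕ) (J : Finset (Fin (n + 1))) :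
    Fin (n + 1) → EuclideanSpace ℝ (Fin d) :=
  fun i => if (Fin.last n ∈ J) = (i ∈ J) then -(e1 d) else e1 d

/-- The manifold `V_d(ℓ) = {ρ ∈ Z ∣ ∑_{i≤n} ℓᵢ ρ(i) = t e₁ with t ≥ ℓ_{n+1}}`. -/
def Vspace (d n : ℕ) (ℓ : Fin (n + 1) → ℝ) :
    Set (Fin (n + 1) → EuclideanSpace ℝ (Fin d)) :=
  {ρ ∈ Zspace d n | ∃ t : ℝ, ℓ (Fin.last n) ≤ t ∧
    ∑ i : Fin n, ℓ i.castSucc • ρ i.castSucc = t • e1 d}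

/-- A subset `J ⊆ {1,…,n}` (not containing the last index) viewed in `Fin (n+1)`. -/
def liftFinset (n : ℕ) (J : Finset (Fin n)) : Finset (Fin (n + 1)) :=
  J.map Fin.castSuccEmb

/-- `J ∈ S_{⟨n+1⟩}(ℓ)`, i.e. `J ⊆ {1,…,n}` and `J ∪ {n+1}` is `ℓ`-short. -/
def memShortCone {n : ℕ} (ℓ : Fin (n + 1) → ℝ) (J : Finset (Fin n)) : Prop :=
  IsShort ℓ (insert (Fin.last n) (liftFinset n J))

/-- The submanifold `R_d(J) = {ρ ∈ Z ∣ ρ(i) = e₁ for i ∉ J}`, for `J ⊆ {1,…,n}`. -/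
def Rsub (d n : ℕ) (J : Finset (Fin n)) :
    Set (Fin (n + 1) → EuclideanSpace ℝ (Fin d)) :=
  {ρ ∈ Zspace d n | ∀ i : Fin n, i ∉ J → ρ i.castSucc = e1 d}

/-- The space `R_d(ℓ) = ⋃_{J ∈ S_{⟨n+1⟩}(ℓ)} R_d(J)`. -/
def Rspace (d n : ℕ) (ℓ : Fin (n + 1) → ℝ) :
    Set (Fin (n + 1) → EuclideanSpace ℝ (Fin d)) :=
  ⋃ J ∈ {J : Finset (Fin n) | memShortCone ℓ J}, Rsub d n J

/-- `a_k(ℓ)`: the number of `ℓ`-short subsets `J` containing the last index with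
`|J| = k + 1`; equivalently the number of `J ∈ S_{⟨n+1⟩}(ℓ)` with `|J| = k`. -/
def shortCount {n : ℕ} (ℓ : Fin (n + 1) → ℝ) (k : ℕ) : ℕ :=
  (@Finset.filter _
    (fun J : Finset (Fin (n + 1)) =>
      IsShort ℓ J ∧ Fin.last n ∈ J ∧ J.card = k + 1)
    (Classical.decPred _) Finset.univ).card

/-! ### The subgroup of `O(d)` stabilising the first axis, and its action -/

/-- The action of a `d × d`-matrix on `ℝ^d`. -/
def matVec {d : ℕ} (γ : Matrix (Fin d) (Fin d) ℝ) (v : EuclideanSpace ℝ (Fin d)) :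
    EuclideanSpace ℝ (Fin d) := WithLp.toLp 2 (γ.mulVec v)

/-- The copy of `O(d-1)` inside `O(d)`: orthogonal matrices fixing `e₁`. -/
def OStab (d : ℕ) : Set (Matrix (Fin d) (Fin d) ℝ) :=
  {γ | γ ∈ Matrix.orthogonalGroup (Fin d) ℝ ∧ matVec γ (e1 d) = e1 d}

/-- The (diagonal) action of a matrix on configurations. -/
def matAct {d m : ℕ} (γ : Matrix (Fin d) (Fin d) ℝ)
    (z : Fin m → EuclideanSpace ℝ (Fin d)) : Fin m → EuclideanSpace ℝ (Fin d) :=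
  fun i => matVec γ (z i)

/-! ### Smooth maps between subsets of normed spaces, and (equivariant) diffeomorphisms

A map between subsets of real normed vector spaces is *smooth* if around the source
set it extends to a `C^∞` map of the ambient spaces.  For embedded submanifolds of
euclidean spaces (such as all spaces occurring in this paper) this is the usual
notion of a smooth map, and bijections which are smooth in both directions are
exactly diffeomorphisms. -/

/-- `f : s → t` is smooth in the submanifold sense. -/
def IsSmoothSubsetMap {E F : Type*} [NormedAddCommGroup E] [NormedSpace ℝ E]
    [NormedAddCommGroup F] [NormedSpace ℝ F] (s : Set E) (t : Set F)
    (f : s → t) : Prop :=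
  ∃ (U : Set E) (g : E → F), IsOpen U ∧ s ⊆ U ∧ ContDiffOn ℝ (⊤ : ℕ∞) g U ∧
    ∀ x : s, g x = (f x : F)

/-- Two subsets of normed spaces are diffeomorphic (as submanifolds). -/
def IsDiffeomorphic {E F : Type*} [NormedAddCommGroup E] [NormedSpace ℝ E]
    [NormedAddCommGroup F] [NormedSpace ℝ F] (s : Set E) (t : Set F) : Prop :=
  ∃ e : s ≃ t, IsSmoothSubsetMap s t e ∧ IsSmoothSubsetMap t s e.symm

/-- Two subsets of `(ℝ^d)^m` are `O(d-1)`-equivariantly diffeomorphic: there is a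
diffeomorphism commuting with the coordinatewise action of the subgroup of `O(d)`
stabilising the first axis. -/
def IsEquivariantlyDiffeomorphic (d m : ℕ)
    (s t : Set (Fin m → EuclideanSpace ℝ (Fin d))) : Prop :=
  ∃ e : s ≃ t, IsSmoothSubsetMap s t e ∧ IsSmoothSubsetMap t s e.symm ∧
    ∀ γ ∈ OStab d, ∀ x y : s, (y : Fin m → EuclideanSpace ℝ (Fin d)) = matAct γ x →
      (e y : Fin m → EuclideanSpace ℝ (Fin d)) = matAct γ (e x)

end ChainSpaces

noncomputable section Morse

/-- `f` restricted to `s` has a nondegenerate critical point of index `lam` at `p`,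
in the sense of the Morse lemma: there is a smooth chart of `s` around `p`
(smooth as a map of submanifolds, i.e. with a smooth ambient local inverse) in which
`f` becomes `f p - x₁² - ⋯ - x_lam² + x_{lam+1}² + ⋯ + x_m²`. -/
def HasMorseChartAt {A : Type*} [NormedAddCommGroup A] [NormedSpace ℝ A]
    (s : Set A) (f : A → ℝ) (p : A) (m lam : ℕ) : Prop :=
  ∃ (V : Set (EuclideanSpace ℝ (Fin m))) (U : Set A)
    (ψ : EuclideanSpace ℝ (Fin m) → A) (χ : A → EuclideanSpace ℝ (Fin m)),
    IsOpen V ∧ (0 : EuclideanSpace ℝ (Fin m)) ∈ V ∧ IsOpen U ∧ p ∈ U ∧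
    ContDiffOn ℝ (⊤ : ℕ∞) ψ V ∧ ContDiffOn ℝ (⊤ : ℕ∞) χ U ∧
    ψ 0 = p ∧ ψ '' V = s ∩ U ∧ (∀ x ∈ V, χ (ψ x) = x) ∧
    ∀ x ∈ V, f (ψ x) =
      f p + ∑ i : Fin m, (if (i : ℕ) < lam then -1 else 1) * (x i) ^ 2

end Morse

noncomputable section Singular

open scoped BigOperators

/-! ### Singular homology and cohomology

We set up singular (co)homology of a topological space with coefficients in a
commutative ring from scratch, together with the cup product on cochains
(via the front/back face formula), pullbacks and pushforwards, and the Kronecker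
pairing. -/

/-- The topological standard `k`-simplex. -/
abbrev TopSimplex (k : ℕ) : Type := (stdSimplex ℝ (Fin (k + 1)) : Set (Fin (k + 1) → ℝ))

/-- Singular `k`-simplices of `X`. -/
abbrev SingularSimplex (X : Type*) [TopologicalSpace X] (k : ℕ) := C(TopSimplex k, X)

/-- Singular `k`-chains with coefficients in `R`. -/
abbrev SingularChain (X : Type*) [TopologicalSpace X] (R : Type*) [CommRing R] (k : ℕ) :=
  SingularSimplex X k →₀ R

/-- Singular `k`-cochains with coefficients in `R`. -/
abbrev SingularCochain (X : Type*) [TopologicalSpace X] (R : Type*) [CommRing R] (k : ℕ) :=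
  SingularSimplex X k → R

/-- The affine map `Δ^a → Δ^b` induced by a map `g` on vertices. -/
def affineSimplexMap {a b : ℕ} (g : Fin (a + 1) → Fin (b + 1)) :
    C(TopSimplex a, TopSimplex b) where
  toFun x := ⟨fun j => ∑ l ∈ Finset.univ.filter (fun l : Fin (a + 1) => g l = j),
      (x : Fin (a + 1) → ℝ) l, by
    constructor
    · intro j
      exact Finset.sum_nonneg fun l _ => x.2.1 l
    · rw [Finset.sum_fiberwise Finset.univ g (fun l => (x : Fin (a + 1) → ℝ) l)]
      exact x.2.2⟩
  continuous_toFun := by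
    apply Continuous.subtype_mk
    apply continuous_pi
    intro j
    exact continuous_finset_sum _ fun l _ => (continuous_apply l).comp continuous_subtype_val

/-- The `i`-th face inclusion `Δ^k → Δ^{k+1}`. -/
def faceIncl (k : ℕ) (i : Fin (k + 2)) : C(TopSimplex k, TopSimplex (k + 1)) :=
  affineSimplexMap i.succAbove

/-- The front face inclusion `Δ^p → Δ^{p+q}` (onto the first `p+1` vertices). -/
def frontIncl (p q : ℕ) : C(TopSimplex p, TopSimplex (p + q)) :=
  affineSimplexMap (fun l : Fin (p + 1) => (⟨(l : ℕ), by omega⟩ : Fin (p + q + 1)))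

/-- The back face inclusion `Δ^q → Δ^{p+q}` (onto the last `q+1` vertices). -/
def backIncl (p q : ℕ) : C(TopSimplex q, TopSimplex (p + q)) :=
  affineSimplexMap (fun l : Fin (q + 1) => (⟨p + (l : ℕ), by omega⟩ : Fin (p + q + 1)))

variable {X Y : Type*} [TopologicalSpace X] [TopologicalSpace Y]
variable {R : Type*} [CommRing R]

/-- The boundary operator on singular chains. -/
def boundaryOp (X : Type*) [TopologicalSpace X] (R : Type*) [CommRing R] (k : ℕ) :
    SingularChain X R (k + 1) →+ SingularChain X R k :=
  Finsupp.liftAddHom (fun σ : SingularSimplex X (k + 1) =>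
    ∑ i : Fin (k + 2),
      (Finsupp.singleAddHom (σ.comp (faceIncl k i))).comp
        (AddMonoidHom.mulLeft ((-1 : R) ^ (i : ℕ))))

/-- The cycles: kernel of the boundary (everything in degree `0`). -/
def cyclesSubgroup (X : Type*) [TopologicalSpace X] (R : Type*) [CommRing R] :
    (k : ℕ) → AddSubgroup (SingularChain X R k)
  | 0 => ⊤
  | (m + 1) => (boundaryOp X R m).ker

/-- The boundaries: range of the boundary operator. -/
def boundariesSubgroup (X : Type*) [TopologicalSpace X] (R : Type*) [CommRing R] (k : ℕ) :
    AddSubgroup (SingularChain X R k) :=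
  (boundaryOp X R k).range

/-- Singular homology `H_k(X; R)`, as the quotient of the cycles by the
boundaries lying in it. -/
def SingularHomology (X : Type*) [TopologicalSpace X] (R : Type*) [CommRing R] (k : ℕ) :=
  cyclesSubgroup X R k ⧸
    ((boundariesSubgroup X R k).comap (cyclesSubgroup X R k).subtype)

instance (k : ℕ) : AddCommGroup (SingularHomology X R k) := by
  unfold SingularHomology; infer_instance

/-- The homology class of a cycle. -/
def homologyClass {k : ℕ} (z : cyclesSubgroup X R k) : SingularHomology X R k :=
  QuotientAddGroup.mk' _ z

/-- Pushforward of singular chains along a continuous map. -/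
def chainPushforward (f : C(X, Y)) (R : Type*) [CommRing R] (k : ℕ) :
    SingularChain X R k →+ SingularChain Y R k :=
  Finsupp.mapDomain.addMonoidHom (fun σ : SingularSimplex X k => f.comp σ)

/-- The coboundary operator on singular cochains. -/
def coboundaryOp (X : Type*) [TopologicalSpace X] (R : Type*) [CommRing R] (k : ℕ) :
    SingularCochain X R k →+ SingularCochain X R (k + 1) :=
  AddMonoidHom.mk'
    (fun a => fun σ : SingularSimplex X (k + 1) =>
      ∑ i : Fin (k + 2), (-1 : R) ^ (i : ℕ) * a (σ.comp (faceIncl k i)))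
    (by
      intro a b
      funext σ
      simp [Pi.add_apply, mul_add, Finset.sum_add_distrib])

/-- The cocycles: kernel of the coboundary operator. -/
def cocyclesSubgroup (X : Type*) [TopologicalSpace X] (R : Type*) [CommRing R] (k : ℕ) :
    AddSubgroup (SingularCochain X R k) :=
  (coboundaryOp X R k).ker

/-- The coboundaries (`0` in degree zero). -/
def coboundariesSubgroup (X : Type*) [TopologicalSpace X] (R : Type*) [CommRing R] :
    (k : ℕ) → AddSubgroup (SingularCochain X R k)
  | 0 => ⊥
  | (m + 1) => (coboundaryOp X R m).range

/-- `a` is a coboundary. -/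
def IsCoboundary {X : Type*} [TopologicalSpace X] {R : Type*} [CommRing R] {k : ℕ}
    (a : SingularCochain X R k) : Prop :=
  a ∈ coboundariesSubgroup X R k

/-- Singular cohomology `H^k(X; R)`, as the quotient of the cocycles by the
coboundaries lying in it. -/
def SingularCohomology (X : Type*) [TopologicalSpace X] (R : Type*) [CommRing R] (k : ℕ) :=
  cocyclesSubgroup X R k ⧸
    ((coboundariesSubgroup X R k).comap (cocyclesSubgroup X R k).subtype)

instance (k : ℕ) : AddCommGroup (SingularCohomology X R k) := by
  unfold SingularCohomology; infer_instance

/-- The cohomology class of a cocycle. -/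
def cohomologyClass {k : ℕ} (a : cocyclesSubgroup X R k) : SingularCohomology X R k :=
  QuotientAddGroup.mk' _ a

/-- The cup product of singular cochains, given by the usual front/back face
formula `(a ⌣ b)(σ) = a(σ|front) * b(σ|back)`. -/
def cupProduct {p q : ℕ} (a : SingularCochain X R p) (b : SingularCochain X R q) :
    SingularCochain X R (p + q) :=
  fun σ => a (σ.comp (frontIncl p q)) * b (σ.comp (backIncl p q))

/-- Pullback of singular cochains along a continuous map. -/
def cochainPullback (f : C(X, Y)) {R : Type*} [CommRing R] {k : ℕ}
    (a : SingularCochain Y R k) : SingularCochain X R k :=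
  fun σ => a (f.comp σ)

/-- The Kronecker pairing between cochains and chains. -/
def kroneckerPairing {k : ℕ} (a : SingularCochain X R k) (c : SingularChain X R k) : R :=
  c.sum fun σ r => r * a σ

/-- Transport of cochains along an equality of degrees. -/
def cochainCast {p q : ℕ} (h : p = q) (a : SingularCochain X R p) :
    SingularCochain X R q := h ▸ a

/-- Transport of cohomology along an equality of degrees. -/
def cohomologyCast {p q : ℕ} (h : p = q) (y : SingularCohomology X R p) :
    SingularCohomology X R q := h ▸ y

/-- Transport of homology along an equality of degrees. -/
def homologyCast {p q : ℕ} (h : p = q) (y : SingularHomology X R p) :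
    SingularHomology X R q := h ▸ y

/-- The unit cochain. -/
def oneCochain (X : Type*) [TopologicalSpace X] (R : Type*) [CommRing R] :
    SingularCochain X R 0 := fun _ => (1 : R)

/-- Iterated cup product of a list of `r`-dimensional cochains. -/
def cupList {r : ℕ} {ι : Type*} (ξ : ι → SingularCochain X R r) :
    (l : List ι) → SingularCochain X R (r * l.length)
  | [] => cochainCast (by simp) (oneCochain X R)
  | (i :: t) => cochainCast (by simp [Nat.mul_add, Nat.mul_succ]; ring)
      (cupProduct (ξ i) (cupList ξ t))

/-- The cup-product monomial indexed by a finite set `J` (in increasing order). -/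
def cupMonomial {r : ℕ} {m : ℕ} (ξ : Fin m → SingularCochain X R r)
    (J : Finset (Fin m)) : SingularCochain X R (r * J.card) :=
  cochainCast (by rw [Finset.length_sort]) (cupList ξ (J.sort (· ≤ ·)))

/-- The continuous inclusion map between subspaces. -/
def inclusionMap {Z : Type*} [TopologicalSpace Z] {s t : Set Z} (h : s ⊆ t) :
    C(s, t) := ⟨Set.inclusion h, continuous_inclusion h⟩

/-- The continuous map of a subspace into the whole space. -/
def subtypeMap {Z : Type*} [TopologicalSpace Z] (s : Set Z) : C(s, Z) :=
  ⟨Subtype.val, continuous_subtype_val⟩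

/-- `y ∈ H_k(X; R)` is the image of a fundamental class of the subspace `W ⊆ X`:
it is the pushforward of a cycle of `W` whose homology class generates
`H_k(W; R)`. -/
def IsSubspaceFundamentalClass {Z : Type*} [TopologicalSpace Z] {X : Set Z}
    (R : Type*) [CommRing R] (W : Set Z) (hW : W ⊆ X) (k : ℕ)
    (y : SingularHomology X R k) : Prop :=
  ∃ z : cyclesSubgroup W R k,
    (∀ u : SingularHomology W R k, u ∈ AddSubgroup.zmultiples (homologyClass z)) ∧
    ∃ z' : cyclesSubgroup X R k,
      (z' : SingularChain X R k) =
        chainPushforward (inclusionMap hW) R k (z : SingularChain W R k) ∧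
      y = homologyClass z'

end Singular

noncomputable section RegularValueMachinery

open Topology Set Function Module
open scoped ContDiff Manifold

namespace RegVal

variable {E F : Type*} [NormedAddCommGroup E] [NormedSpace ℝ E] [FiniteDimensional ℝ E]
  [NormedAddCommGroup F] [NormedSpace ℝ F] [FiniteDimensional ℝ F]

/-- A "good chart" for the level set `f ⁻¹' {c}`. -/
structure GoodChart (f : E → F) (c : F) (m : ℕ) where
  Φ : OpenPartialHomeomorph E (F × EuclideanSpace ℝ (Fin m))
  smooth : ContDiffOn ℝ ∞ Φ Φ.source
  smooth_symm : ContDiffOn ℝ ∞ Φ.symm Φ.target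
  fst_eq : ∀ z : E, (Φ z).1 = f z

variable {f : E → F} {c : F} {m : ℕ}

namespace GoodChart

theorem prod_eq (G : GoodChart f c m) {z : E} (hz : f z = c) :
    (c, (G.Φ z).2) = G.Φ z := by
  ext
  · exact (G.fst_eq z ▸ hz).symm
  · rfl

theorem symm_mem (G : GoodChart f c m) {x : EuclideanSpace ℝ (Fin m)}
    (hx : (c, x) ∈ G.Φ.target) : f (G.Φ.symm (c, x)) = c := by
  have h1 := G.Φ.right_inv hx
  have h2 := G.fst_eq (G.Φ.symm (c, x))
  rw [h1] at h2
  exact h2.symm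

open Classical in
/-- The inverse function of the induced chart. -/
noncomputable def invAux (G : GoodChart f c m) (p₀ : (f ⁻¹' {c} : Set E))
    (x : EuclideanSpace ℝ (Fin m)) : (f ⁻¹' {c} : Set E) :=
  if h : (c, x) ∈ G.Φ.target then ⟨G.Φ.symm (c, x), G.symm_mem h⟩ else p₀

theorem invAux_of_mem (G : GoodChart f c m) (p₀ : (f ⁻¹' {c} : Set E))
    {x : EuclideanSpace ℝ (Fin m)} (hx : (c, x) ∈ G.Φ.target) :
    (G.invAux p₀ x : E) = G.Φ.symm (c, x) := by
  simp only [invAux, dif_pos hx]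

/-- The induced chart on the level set. -/
noncomputable def chart (G : GoodChart f c m) (p₀ : (f ⁻¹' {c} : Set E)) :
    OpenPartialHomeomorph (f ⁻¹' {c} : Set E) (EuclideanSpace ℝ (Fin m)) where
  toFun z := (G.Φ z).2
  invFun := G.invAux p₀
  source := Subtype.val ⁻¹' G.Φ.source
  target := {x | (c, x) ∈ G.Φ.target}
  map_source' z hz := by
    show (c, (G.Φ z).2) ∈ G.Φ.target
    rw [G.prod_eq z.2]
    exact G.Φ.map_source hz
  map_target' x hx := by
    show (G.invAux p₀ x : E) ∈ G.Φ.source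
    rw [G.invAux_of_mem p₀ hx]
    exact G.Φ.map_target hx
  left_inv' z hz := by
    have h1 : (c, (G.Φ z).2) ∈ G.Φ.target := by rw [G.prod_eq z.2]; exact G.Φ.map_source hz
    apply Subtype.ext
    rw [G.invAux_of_mem p₀ h1]
    show G.Φ.symm (c, (G.Φ z).2) = z
    rw [G.prod_eq z.2]
    exact G.Φ.left_inv hz
  right_inv' x hx := by
    show (G.Φ (G.invAux p₀ x : E)).2 = x
    rw [G.invAux_of_mem p₀ hx, G.Φ.right_inv hx]
  open_source := G.Φ.open_source.preimage continuous_subtype_val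
  open_target := G.Φ.open_target.preimage (continuous_const.prodMk continuous_id)
  continuousOn_toFun := by
    apply continuous_snd.comp_continuousOn
    exact G.Φ.continuousOn.comp continuous_subtype_val.continuousOn (fun z hz => hz)
  continuousOn_invFun := by
    rw [Topology.IsInducing.subtypeVal.continuousOn_iff]
    apply ContinuousOn.congr (s := {x | (c, x) ∈ G.Φ.target})
      (G.Φ.continuousOn_symm.comp ((continuous_const.prodMk continuous_id).continuousOn)
        (fun x hx => hx))
    intro x hx
    show (G.invAux p₀ x : E) = G.Φ.symm (c, x)
    exact G.invAux_of_mem p₀ hx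

theorem chart_apply (G : GoodChart f c m) (p₀ : (f ⁻¹' {c} : Set E))
    (z : (f ⁻¹' {c} : Set E)) : G.chart p₀ z = (G.Φ z).2 := rfl

theorem chart_source (G : GoodChart f c m) (p₀ : (f ⁻¹' {c} : Set E)) :
    (G.chart p₀).source = Subtype.val ⁻¹' G.Φ.source := rfl

theorem chart_target (G : GoodChart f c m) (p₀ : (f ⁻¹' {c} : Set E)) :
    (G.chart p₀).target = {x | (c, x) ∈ G.Φ.target} := rfl

theorem chart_symm_apply (G : GoodChart f c m) (p₀ : (f ⁻¹' {c} : Set E))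
    {x : EuclideanSpace ℝ (Fin m)} (hx : (c, x) ∈ G.Φ.target) :
    ((G.chart p₀).symm x : E) = G.Φ.symm (c, x) := by
  exact G.invAux_of_mem p₀ hx

/-- Transitions between two good charts are smooth. -/
theorem transition_smooth (G G' : GoodChart f c m) (p₀ q₀ : (f ⁻¹' {c} : Set E)) :
    ContDiffOn ℝ ∞ (G'.chart q₀ ∘ (G.chart p₀).symm)
      ((G.chart p₀).symm.source ∩ (G.chart p₀).symm ⁻¹' (G'.chart q₀).source) := by
  have hsub : ((G.chart p₀).symm.source ∩ (G.chart p₀).symm ⁻¹' (G'.chart q₀).source) ⊆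
      {x | (c, x) ∈ G.Φ.target ∧ G.Φ.symm (c, x) ∈ G'.Φ.source} := by
    rintro x ⟨hx1, hx2⟩
    have hx1' : (c, x) ∈ G.Φ.target := hx1
    refine ⟨hx1', ?_⟩
    have := G.chart_symm_apply p₀ hx1'
    have hx2' : ((G.chart p₀).symm x : E) ∈ G'.Φ.source := hx2
    rwa [this] at hx2'
  have hsm : ContDiffOn ℝ ∞ (fun x => (G'.Φ (G.Φ.symm (c, x))).2)
      {x | (c, x) ∈ G.Φ.target ∧ G.Φ.symm (c, x) ∈ G'.Φ.source} := by
    apply contDiff_snd.comp_contDiffOn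
    apply G'.smooth.comp
    · exact G.smooth_symm.comp
        ((contDiff_const.prodMk contDiff_id).contDiffOn) (fun x hx => hx.1)
    · exact fun x hx => hx.2
  apply (hsm.mono hsub).congr
  intro x hx
  have h := hsub hx
  show (G'.Φ (((G.chart p₀).symm x : E))).2 = _
  rw [G.chart_symm_apply p₀ h.1]

end GoodChart

end RegVal

namespace RegVal

variable {E F : Type*} [NormedAddCommGroup E] [NormedSpace ℝ E] [FiniteDimensional ℝ E]
  [NormedAddCommGroup F] [NormedSpace ℝ F] [FiniteDimensional ℝ F]

theorem one_le_infty : (∞ : WithTop ℕ∞) ≠ 0 := by simp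

theorem exists_goodChart {f : E → F} {c : F} {m : ℕ}
    (hf : ContDiff ℝ ∞ f)
    (hdim : finrank ℝ E = finrank ℝ F + m)
    (hreg : ∀ q : E, f q = c → Surjective (fderiv ℝ f q))
    {p : E} (hp : f p = c) :
    ∃ G : GoodChart f c m, p ∈ G.Φ.source := by
  classical
  set Dp : E →L[ℝ] F := fderiv ℝ f p with hDp
  have hsurj : LinearMap.range (Dp : E →ₗ[ℝ] F) = ⊤ := LinearMap.range_eq_top_of_surjective (Dp : E →ₗ[ℝ] F) (hreg p hp)
  set K : Submodule ℝ E := LinearMap.ker (Dp : E →ₗ[ℝ] F) with hKdef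
  have hKrank : finrank ℝ K = m := by
    have h1 := LinearMap.finrank_range_add_finrank_ker (Dp : E →ₗ[ℝ] F)
    rw [show LinearMap.range (Dp : E →ₗ[ℝ] F) = LinearMap.range (Dp : E →ₗ[ℝ] F) from rfl,
      show LinearMap.ker (Dp : E →ₗ[ℝ] F) = LinearMap.ker (Dp : E →ₗ[ℝ] F) from rfl, hsurj] at h1
    simp only [finrank_top] at h1
    rw [hKdef]
    omega
  obtain ⟨K', hK'⟩ := Submodule.exists_isCompl K
  let pr : E →ₗ[ℝ] K := Submodule.linearProjOfIsCompl K K' hK'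
  let prL : E →L[ℝ] K := LinearMap.toContinuousLinearMap pr
  let ψ : K ≃L[ℝ] EuclideanSpace ℝ (Fin m) :=
    (LinearEquiv.ofFinrankEq _ _
      (by rw [hKrank, finrank_euclideanSpace_fin])).toContinuousLinearEquiv
  let A : E →L[ℝ] EuclideanSpace ℝ (Fin m) := (ψ : K →L[ℝ] EuclideanSpace ℝ (Fin m)).comp prL
  let g : E → F × EuclideanSpace ℝ (Fin m) := fun z => (f z, A (z - p))
  have hg : ContDiff ℝ ∞ g := hf.prodMk (A.contDiff.comp (contDiff_id.sub contDiff_const))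
  have hgd : ∀ z : E, HasFDerivAt g ((fderiv ℝ f z).prod A) z := by
    intro z
    apply HasFDerivAt.prodMk ((hf.differentiable one_le_infty z).hasFDerivAt)
    have h2 : (fun z : E => A (z - p)) = fun z => A z - A p := by
      ext z; rw [map_sub]
    rw [h2]
    exact A.hasFDerivAt.sub_const (A p)
  set Dg : E →L[ℝ] F × EuclideanSpace ℝ (Fin m) := Dp.prod A with hDg
  have hinj : LinearMap.ker (Dg : E →ₗ[ℝ] F × EuclideanSpace ℝ (Fin m)) = ⊥ := by
    rw [Submodule.eq_bot_iff]
    intro v hv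
    rw [LinearMap.mem_ker] at hv
    have hv1 : Dp v = 0 := congrArg Prod.fst hv
    have hv2 : A v = 0 := congrArg Prod.snd hv
    have hvK : v ∈ K := hv1
    have h3 : prL v = 0 := by
      have := ψ.injective (a₁ := prL v) (a₂ := 0) (by rw [map_zero]; exact hv2)
      exact this
    have h4 : pr v = ⟨v, hvK⟩ := Submodule.linearProjOfIsCompl_apply_left hK' ⟨v, hvK⟩
    have h5 : prL v = pr v := rfl
    rw [h5, h4] at h3
    exact congrArg Subtype.val h3
  have hr : LinearMap.range (Dg : E →ₗ[ℝ] F × EuclideanSpace ℝ (Fin m)) = ⊤ := by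
    apply Submodule.eq_top_of_finrank_eq
    have h1 := LinearMap.finrank_range_add_finrank_ker (Dg : E →ₗ[ℝ] F × EuclideanSpace ℝ (Fin m))
    rw [show LinearMap.range (Dg : E →ₗ[ℝ] F × EuclideanSpace ℝ (Fin m)) = LinearMap.range (Dg : E →ₗ[ℝ] F × EuclideanSpace ℝ (Fin m))
      from rfl,
      show LinearMap.ker (Dg : E →ₗ[ℝ] F × EuclideanSpace ℝ (Fin m)) = LinearMap.ker (Dg : E →ₗ[ℝ] F × EuclideanSpace ℝ (Fin m))
      from rfl, hinj] at h1
    simp only [finrank_bot, add_zero] at h1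
    rw [h1, hdim, Module.finrank_prod, finrank_euclideanSpace_fin]
  let e₀ : E ≃L[ℝ] F × EuclideanSpace ℝ (Fin m) := ContinuousLinearEquiv.ofBijective Dg hinj hr
  have he₀ : (e₀ : E →L[ℝ] F × EuclideanSpace ℝ (Fin m)) = Dg := by rfl
  have hgp : HasFDerivAt g (e₀ : E →L[ℝ] F × EuclideanSpace ℝ (Fin m)) p := by
    rw [he₀, hDg, hDp]; exact hgd p
  let Φ₀ := hg.contDiffAt.toOpenPartialHomeomorph g hgp one_le_infty
  set Dset : Set E := (fderiv ℝ g) ⁻¹'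
    (range ((↑) : (E ≃L[ℝ] F × EuclideanSpace ℝ (Fin m)) → E →L[ℝ] F × EuclideanSpace ℝ (Fin m)))
    with hDset
  have hDopen : IsOpen Dset :=
    ContinuousLinearEquiv.isOpen.preimage (hg.continuous_fderiv one_le_infty)
  have hpD : p ∈ Dset := ⟨e₀, by rw [he₀, hDg, hDp, ← (hgd p).fderiv]⟩
  let Φ : OpenPartialHomeomorph E (F × EuclideanSpace ℝ (Fin m)) := Φ₀.restr Dset
  have hΦcoe : ⇑Φ = g := rfl
  have hΦsrc : Φ.source = Φ₀.source ∩ Dset := by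
    show Φ₀.source ∩ interior Dset = _
    rw [hDopen.interior_eq]
  refine ⟨⟨Φ, ?_, ?_, fun z => rfl⟩, ?_⟩
  · exact hg.contDiffOn
  · intro y hy
    have hy' : Φ.symm y ∈ Φ.source := Φ.map_target hy
    rw [hΦsrc] at hy'
    obtain ⟨e, he⟩ := hy'.2
    apply ContDiffAt.contDiffWithinAt
    apply Φ.contDiffAt_symm hy (f₀' := e)
    · rw [hΦcoe, he]
      exact (hg.differentiable one_le_infty (Φ.symm y)).hasFDerivAt
    · exact hg.contDiffAt
  · rw [hΦsrc]
    exact ⟨hg.contDiffAt.mem_toOpenPartialHomeomorph_source hgp one_le_infty, hpD⟩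

theorem regular_value_manifold (m : ℕ) (f : E → F) (c : F)
    (hf : ContDiff ℝ ∞ f)
    (hdim : finrank ℝ E = finrank ℝ F + m)
    (hreg : ∀ q : E, f q = c → Surjective (fderiv ℝ f q)) :
    ∃ cs : ChartedSpace (EuclideanSpace ℝ (Fin m)) (f ⁻¹' {c} : Set E),
      @IsManifold ℝ _ (EuclideanSpace ℝ (Fin m)) _ _
        (EuclideanSpace ℝ (Fin m)) _ (𝓡 m) ((⊤ : ℕ∞) : WithTop ℕ∞) (f ⁻¹' {c} : Set E) _ cs := by
  classical
  choose G hG using fun p : (f ⁻¹' {c} : Set E) =>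
    exists_goodChart hf hdim hreg (mem_singleton_iff.1 p.2)
  let cs : ChartedSpace (EuclideanSpace ℝ (Fin m)) (f ⁻¹' {c} : Set E) :=
    { atlas := Set.range (fun p : (f ⁻¹' {c} : Set E) => (G p).chart p)
      chartAt := fun p => (G p).chart p
      mem_chart_source := fun p => hG p
      chart_mem_atlas := fun p => mem_range_self p }
  refine ⟨cs, ?_⟩
  apply isManifold_of_contDiffOn
  intro e e' he he'
  obtain ⟨p, rfl⟩ := he
  obtain ⟨q, rfl⟩ := he'
  simp only [modelWithCornersSelf_coe, modelWithCornersSelf_coe_symm, CompTriple.comp_eq,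
    preimage_id, range_id, inter_univ]
  have := GoodChart.transition_smooth (G p) (G q) p q
  apply this.mono
  rw [OpenPartialHomeomorph.trans_source]

end RegVal


noncomputable section ChainProof

open Topology Set Function Module
open scoped ContDiff Manifold RealInnerProductSpace

namespace ChainProof

theorem sign_sum_ne {n : ℕ} {ℓ : Fin (n + 1) → ℝ} (hgen : IsGeneric ℓ)
    (σ : Fin (n + 1) → ℝ) (hσ : ∀ i, σ i = 1 ∨ σ i = -1) :
    ∑ i, ℓ i * σ i ≠ 0 := by
  intro h0
  classical
  set K : Finset (Fin (n + 1)) := Finset.univ.filter (fun i => σ i = 1) with hK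
  apply hgen K
  have h1 : ∑ i ∈ K, ℓ i * σ i = ∑ i ∈ K, ℓ i :=
    Finset.sum_congr rfl (fun i hi => by rw [(Finset.mem_filter.1 hi).2, mul_one])
  have h2 : ∑ i ∈ Kᶜ, ℓ i * σ i = -∑ i ∈ Kᶜ, ℓ i := by
    rw [← Finset.sum_neg_distrib]
    apply Finset.sum_congr rfl
    intro i hi
    have hσi : σ i = -1 := by
      rcases hσ i with h | h
      · exact absurd (Finset.mem_filter.2 ⟨Finset.mem_univ i, h⟩) (Finset.mem_compl.1 hi)
      · exact h
    rw [hσi]; ring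
  have h3 : ∑ i ∈ K, ℓ i * σ i + ∑ i ∈ Kᶜ, ℓ i * σ i = 0 := by
    rw [Finset.sum_add_sum_compl]; exact h0
  rw [h1, h2] at h3
  linarith

theorem norm_e1 (d : ℕ) (hd : 0 < d) : ‖e1 d‖ = 1 := by
  have h : e1 d = EuclideanSpace.single (⟨0, hd⟩ : Fin d) (1 : ℝ) := by
    ext j
    rw [EuclideanSpace.single_apply]
    by_cases h : (j : ℕ) = 0
    · rw [if_pos (by exact Fin.ext h), e1, PiLp.toLp_apply, if_pos h]
    · rw [if_neg (fun hc => h (by rw [hc])), e1, PiLp.toLp_apply, if_neg h]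
  rw [h, EuclideanSpace.norm_single, norm_one]

variable (d n : ℕ) (ℓ : Fin (n + 1) → ℝ)

/-- The defining map of the chain space. -/
def fmap : (Fin n → EuclideanSpace ℝ (Fin d)) → (Fin n → ℝ) × EuclideanSpace ℝ (Fin d) :=
  fun z => (fun i => ⟪z i, z i⟫, (∑ i : Fin n, ℓ i.castSucc • z i) - ℓ (Fin.last n) • e1 d)

/-- The regular value. -/
def cpt : (Fin n → ℝ) × EuclideanSpace ℝ (Fin d) := (fun _ => 1, 0)

theorem inner_self_eq_one_iff {x : EuclideanSpace ℝ (Fin d)} : ⟪x, x⟫ = 1 ↔ ‖x‖ = 1 := by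
  rw [real_inner_self_eq_norm_mul_norm, mul_self_eq_one_iff]
  constructor
  · rintro (h | h)
    · exact h
    · nlinarith [norm_nonneg x]
  · exact fun h => Or.inl h

theorem preimage_eq : chainSpace d n ℓ = fmap d n ℓ ⁻¹' {cpt d n} := by
  ext z
  simp only [chainSpace, mem_setOf_eq, mem_preimage, mem_singleton_iff, fmap, cpt,
    Prod.mk.injEq, funext_iff, sub_eq_zero]
  constructor
  · rintro ⟨h1, h2⟩
    exact ⟨fun i => (inner_self_eq_one_iff d).2 (h1 i), h2⟩
  · rintro ⟨h1, h2⟩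
    exact ⟨fun i => (inner_self_eq_one_iff d).1 (h1 i), h2⟩

/-- The linear part of the sum condition. -/
def Lsum : (Fin n → EuclideanSpace ℝ (Fin d)) →L[ℝ] EuclideanSpace ℝ (Fin d) :=
  ∑ i : Fin n, ℓ i.castSucc • ContinuousLinearMap.proj i

theorem Lsum_apply (z : Fin n → EuclideanSpace ℝ (Fin d)) :
    Lsum d n ℓ z = ∑ i : Fin n, ℓ i.castSucc • z i := by
  simp [Lsum, ContinuousLinearMap.sum_apply]

theorem fmap_contDiff : ContDiff ℝ ∞ (fmap d n ℓ) := by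
  apply ContDiff.prodMk
  · rw [contDiff_pi]
    intro i
    exact (contDiff_pi.1 contDiff_id i).inner ℝ (contDiff_pi.1 contDiff_id i)
  · have h : (fun z : Fin n → EuclideanSpace ℝ (Fin d) =>
        (∑ i : Fin n, ℓ i.castSucc • z i) - ℓ (Fin.last n) • e1 d) =
        fun z => Lsum d n ℓ z - ℓ (Fin.last n) • e1 d := by
      funext z; rw [Lsum_apply]
    rw [h]
    exact (Lsum d n ℓ).contDiff.sub contDiff_const

/-- The derivative of `fmap`. -/
def Dmap (q : Fin n → EuclideanSpace ℝ (Fin d)) :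
    (Fin n → EuclideanSpace ℝ (Fin d)) →L[ℝ] (Fin n → ℝ) × EuclideanSpace ℝ (Fin d) :=
  (ContinuousLinearMap.pi fun i =>
    (2 : ℝ) • ((innerSL ℝ (q i)).comp (ContinuousLinearMap.proj i))).prod (Lsum d n ℓ)

theorem fmap_hasFDerivAt (q : Fin n → EuclideanSpace ℝ (Fin d)) :
    HasFDerivAt (fmap d n ℓ) (Dmap d n ℓ q) q := by
  apply HasFDerivAt.prodMk
  · apply hasFDerivAt_pi.2
    intro i
    have h := (hasFDerivAt_apply (𝕜 := ℝ) i q).inner ℝ (hasFDerivAt_apply (𝕜 := ℝ) i q)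
    refine h.congr_fderiv ?_
    ext v
    simp only [ContinuousLinearMap.smul_apply, ContinuousLinearMap.comp_apply,
      ContinuousLinearMap.proj_apply, innerSL_apply_apply, fderivInnerCLM_apply,
      ContinuousLinearMap.prod_apply, smul_eq_mul]
    rw [real_inner_comm (v i) (q i)]
    ring
  · have h : (fun z : Fin n → EuclideanSpace ℝ (Fin d) =>
        (∑ i : Fin n, ℓ i.castSucc • z i) - ℓ (Fin.last n) • e1 d) =
        fun z => Lsum d n ℓ z - ℓ (Fin.last n) • e1 d := by
      funext z; rw [Lsum_apply]
    show HasFDerivAt (fun z : Fin n → EuclideanSpace ℝ (Fin d) =>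
        (∑ i : Fin n, ℓ i.castSucc • z i) - ℓ (Fin.last n) • e1 d) (Lsum d n ℓ) q
    rw [h]
    exact (Lsum d n ℓ).hasFDerivAt.sub_const _

theorem exists_orth_sum (hd : 2 ≤ d) (hpos : LengthVectorPos ℓ) (hgen : IsGeneric ℓ)
    {q : Fin n → EuclideanSpace ℝ (Fin d)} (hq : ∀ i, ‖q i‖ = 1)
    (hsum : ∑ i : Fin n, ℓ i.castSucc • q i = ℓ (Fin.last n) • e1 d)
    (b : EuclideanSpace ℝ (Fin d)) :
    ∃ w : Fin n → EuclideanSpace ℝ (Fin d),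
      (∀ i, ⟪q i, w i⟫ = 0) ∧ ∑ i : Fin n, ℓ i.castSucc • w i = b := by
  classical
  have hqi : ∀ i, ⟪q i, q i⟫ = 1 := fun i => (inner_self_eq_one_iff d).2 (hq i)
  let P : Fin n → EuclideanSpace ℝ (Fin d) →ₗ[ℝ] EuclideanSpace ℝ (Fin d) := fun i =>
    LinearMap.id - (LinearMap.toSpanSingleton ℝ _ (q i)).comp (innerSL ℝ (q i)).toLinearMap
  have hP : ∀ i v, P i v = v - ⟪q i, v⟫ • q i := fun i v => rfl
  let Lm : (Fin n → EuclideanSpace ℝ (Fin d)) →ₗ[ℝ] EuclideanSpace ℝ (Fin d) :=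
    ∑ i : Fin n, ℓ i.castSucc • (P i).comp (LinearMap.proj i)
  have hLm : ∀ w, Lm w = ∑ i : Fin n, ℓ i.castSucc • P i (w i) := by
    intro w
    simp [Lm, LinearMap.sum_apply]
  have hrange : LinearMap.range Lm = ⊤ := by
    apply Submodule.orthogonal_eq_bot_iff.mp
    rw [Submodule.eq_bot_iff]
    intro u hu
    by_contra hu0
    have key : ∀ i, u = ⟪q i, u⟫ • q i := by
      intro i
      set v := u - ⟪q i, u⟫ • q i with hv
      have hqv : ⟪q i, v⟫ = 0 := by
        rw [hv, inner_sub_right, real_inner_smul_right, hqi i]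
        ring
      have h0 : ⟪Lm (Pi.single i v), u⟫ = 0 :=
        (Submodule.mem_orthogonal _ u).1 hu _ ⟨Pi.single i v, rfl⟩
      have hLs : Lm (Pi.single i v) = ℓ i.castSucc • v := by
        rw [hLm, Finset.sum_eq_single i]
        · rw [Pi.single_eq_same, hP, hqv, zero_smul, sub_zero]
        · intro j _ hj
          rw [Pi.single_eq_of_ne hj, map_zero, smul_zero]
        · intro h; exact absurd (Finset.mem_univ i) h
      have hu' : u = v + ⟪q i, u⟫ • q i := by rw [hv, sub_add_cancel]
      have hvq : ⟪v, q i⟫ = 0 := by rw [real_inner_comm]; exact hqv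
      have hvu : ⟪v, u⟫ = ⟪v, v⟫ := by
        rw [hu', inner_add_right, real_inner_smul_right, hvq]
        ring
      rw [hLs, real_inner_smul_left, hvu] at h0
      have hvv : ⟪v, v⟫ = 0 := by
        have := hpos i.castSucc
        rcases mul_eq_zero.1 h0 with h | h
        · exact absurd h (ne_of_gt this)
        · exact h
      have hv0 : v = 0 := inner_self_eq_zero.1 hvv
      have : u - ⟪q i, u⟫ • q i = 0 := hv0
      rw [sub_eq_zero] at this
      exact this
    set c : Fin n → ℝ := fun i => ⟪q i, u⟫ with hc
    have hcu : ∀ i, ‖u‖ = |c i| := by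
      intro i
      conv_lhs => rw [key i]
      rw [norm_smul, hq i, mul_one, Real.norm_eq_abs]
    have hc0 : ∀ i, c i ≠ 0 := by
      intro i h
      exact hu0 (by rw [key i]; rw [show ⟪q i, u⟫ = c i from rfl, h, zero_smul])
    have hqu : ∀ i, q i = (c i)⁻¹ • u := by
      intro i
      conv_rhs => rw [key i]
      rw [show ⟪q i, u⟫ = c i from rfl, smul_smul, inv_mul_cancel₀ (hc0 i), one_smul]
    have hte : (∑ i : Fin n, ℓ i.castSucc * (c i)⁻¹) • u = ℓ (Fin.last n) • e1 d := by
      rw [Finset.sum_smul, ← hsum]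
      apply Finset.sum_congr rfl
      intro i _
      rw [hqu i, smul_smul]
    set t : ℝ := ∑ i : Fin n, ℓ i.castSucc * (c i)⁻¹ with ht
    have hu0' : ‖u‖ ≠ 0 := norm_ne_zero_iff.2 hu0
    have hnorm : |t| * ‖u‖ = ℓ (Fin.last n) := by
      have h := congrArg norm hte
      rwa [norm_smul, norm_smul, norm_e1 d (by omega), mul_one, Real.norm_eq_abs,
        Real.norm_eq_abs, abs_of_pos (hpos _)] at h
    set ε : Fin n → ℝ := fun i => ‖u‖ * (c i)⁻¹ with hε
    have hεpm : ∀ i, ε i = 1 ∨ ε i = -1 := by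
      intro i
      have h1 : |ε i| = 1 := by
        rw [show ε i = ‖u‖ * (c i)⁻¹ from rfl, abs_mul, abs_inv, ← hcu i,
          abs_of_nonneg (norm_nonneg u), mul_inv_cancel₀ hu0']
      rcases (abs_eq (by norm_num : (0:ℝ) ≤ 1)).1 h1 with h | h
      · exact Or.inl h
      · exact Or.inr h
    have hsume : ∑ i : Fin n, ℓ i.castSucc * ε i = ‖u‖ * t := by
      rw [ht, Finset.mul_sum]
      apply Finset.sum_congr rfl
      intro i _
      show ℓ i.castSucc * (‖u‖ * (c i)⁻¹) = ‖u‖ * (ℓ i.castSucc * (c i)⁻¹)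
      ring
    have habs : |∑ i : Fin n, ℓ i.castSucc * ε i| = ℓ (Fin.last n) := by
      rw [hsume, abs_mul, abs_of_nonneg (norm_nonneg u), mul_comm, hnorm]
    rcases (abs_eq (le_of_lt (hpos (Fin.last n)))).1 habs with h | h
    · apply sign_sum_ne hgen (Fin.lastCases (-1) ε)
      · intro i
        induction i using Fin.lastCases with
        | last => right; simp
        | cast j => simp only [Fin.lastCases_castSucc]; exact hεpm j
      · rw [Fin.sum_univ_castSucc]
        simp only [Fin.lastCases_castSucc, Fin.lastCases_last]
        rw [h]; ring
    · apply sign_sum_ne hgen (Fin.lastCases 1 ε)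
      · intro i
        induction i using Fin.lastCases with
        | last => left; simp
        | cast j => simp only [Fin.lastCases_castSucc]; exact hεpm j
      · rw [Fin.sum_univ_castSucc]
        simp only [Fin.lastCases_castSucc, Fin.lastCases_last]
        rw [h]; ring
  obtain ⟨w, hw⟩ := LinearMap.range_eq_top.1 hrange b
  refine ⟨fun i => P i (w i), fun i => ?_, ?_⟩
  · show ⟪q i, P i (w i)⟫ = 0
    rw [hP, inner_sub_right, real_inner_smul_right, hqi i]
    ring
  · show ∑ i : Fin n, ℓ i.castSucc • P i (w i) = b
    rw [← hLm]
    exact hw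

theorem fmap_fderiv_surjective (hd : 2 ≤ d) (hpos : LengthVectorPos ℓ) (hgen : IsGeneric ℓ)
    (q : Fin n → EuclideanSpace ℝ (Fin d)) (hq : fmap d n ℓ q = cpt d n) :
    Surjective ⇑(fderiv ℝ (fmap d n ℓ) q) := by
  rw [(fmap_hasFDerivAt d n ℓ q).fderiv]
  have hq1 : ∀ i, ‖q i‖ = 1 := by
    intro i
    have := congrFun (congrArg Prod.fst hq) i
    exact (inner_self_eq_one_iff d).1 this
  have hqi : ∀ i, ⟪q i, q i⟫ = 1 := fun i => (inner_self_eq_one_iff d).2 (hq1 i)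
  have hq2 : ∑ i : Fin n, ℓ i.castSucc • q i = ℓ (Fin.last n) • e1 d := by
    have := congrArg Prod.snd hq
    simpa [fmap, cpt, sub_eq_zero] using this
  rintro ⟨a, b⟩
  obtain ⟨w, hw1, hw2⟩ := exists_orth_sum d n ℓ hd hpos hgen hq1 hq2
    (b - ∑ i : Fin n, ℓ i.castSucc • ((a i / 2) • q i))
  refine ⟨fun i => (a i / 2) • q i + w i, ?_⟩
  have h1 : (Dmap d n ℓ q (fun i => (a i / 2) • q i + w i)).1 = a := by
    funext i
    show (2 : ℝ) • ⟪q i, (a i / 2) • q i + w i⟫ = a i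
    rw [inner_add_right, real_inner_smul_right, hqi i, hw1 i, smul_eq_mul]
    ring
  have h2 : (Dmap d n ℓ q (fun i => (a i / 2) • q i + w i)).2 = b := by
    show Lsum d n ℓ _ = b
    rw [Lsum_apply]
    have : ∑ i : Fin n, ℓ i.castSucc • ((a i / 2) • q i + w i) =
        (∑ i : Fin n, ℓ i.castSucc • ((a i / 2) • q i)) +
          ∑ i : Fin n, ℓ i.castSucc • w i := by
      rw [← Finset.sum_add_distrib]
      apply Finset.sum_congr rfl
      intro i _
      rw [smul_add]
    rw [this, hw2]
    abel
  exact Prod.ext h1 h2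

end ChainProof

end ChainProof

namespace ChainProof

theorem chainSpace_isCompact (d n : ℕ) (ℓ : Fin (n + 1) → ℝ) :
    IsCompact (chainSpace d n ℓ) := by
  apply IsCompact.of_isClosed_subset
    (isCompact_closedBall (0 : Fin n → EuclideanSpace ℝ (Fin d)) 1)
  · have h : chainSpace d n ℓ =
        (⋂ i : Fin n, (fun z : Fin n → EuclideanSpace ℝ (Fin d) => ‖z i‖) ⁻¹' {1}) ∩
          ((fun z : Fin n → EuclideanSpace ℝ (Fin d) => ∑ i : Fin n, ℓ i.castSucc • z i) ⁻¹'
            {ℓ (Fin.last n) • e1 d}) := by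
      ext z
      simp [chainSpace, Set.mem_iInter]
    rw [h]
    apply IsClosed.inter
    · exact isClosed_iInter fun i => isClosed_singleton.preimage ((continuous_apply i).norm)
    · exact isClosed_singleton.preimage
        (by fun_prop)
  · intro z hz
    rw [Metric.mem_closedBall, dist_zero_right]
    exact (pi_norm_le_iff_of_nonneg zero_le_one).2 fun i => le_of_eq (hz.1 i)

theorem isEmpty_zero (d : ℕ) (hd : 2 ≤ d) (ℓ : Fin 1 → ℝ) (hpos : LengthVectorPos ℓ) :
    IsEmpty (chainSpace d 0 ℓ) := by
  refine ⟨fun z => ?_⟩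
  obtain ⟨z, hz1, hz2⟩ := z
  have h0 : (∑ i : Fin 0, ℓ i.castSucc • z i) = 0 := by simp
  rw [h0] at hz2
  have h1 := congrArg (fun v : EuclideanSpace ℝ (Fin d) => v ⟨0, by omega⟩) hz2.symm
  have h2 : e1 d ⟨0, by omega⟩ = 1 := by simp [e1]
  have h1' : ℓ (Fin.last 0) * e1 d ⟨0, by omega⟩ = 0 := h1
  rw [h2, mul_one] at h1'
  exact absurd h1' (ne_of_gt (hpos _))

theorem isEmpty_one (d : ℕ) (hd : 2 ≤ d) (ℓ : Fin 2 → ℝ) (hpos : LengthVectorPos ℓ)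
    (hgen : IsGeneric ℓ) : IsEmpty (chainSpace d 1 ℓ) := by
  classical
  refine ⟨fun z => ?_⟩
  obtain ⟨z, hz1, hz2⟩ := z
  rw [Fin.sum_univ_one] at hz2
  have hnorm := congrArg norm hz2
  rw [norm_smul, norm_smul, hz1 0, norm_e1 d (by omega), mul_one, mul_one,
    Real.norm_eq_abs, Real.norm_eq_abs, abs_of_pos (hpos _), abs_of_pos (hpos _)] at hnorm
  have hgen' := hgen {0}
  have hc : ({0}ᶜ : Finset (Fin 2)) = {1} := by decide
  rw [hc, Finset.sum_singleton, Finset.sum_singleton] at hgen'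
  have h1 : ((0 : Fin 1).castSucc : Fin 2) = 0 := rfl
  have h2 : (Fin.last 1 : Fin 2) = 1 := rfl
  rw [h1, h2] at hnorm
  exact hgen' hnorm

theorem empty_manifold {M : Type*} [TopologicalSpace M] [IsEmpty M]
    {E' H : Type*} [NormedAddCommGroup E'] [NormedSpace ℝ E'] [TopologicalSpace H]
    (I : ModelWithCorners ℝ E' H) :
    ∃ cs : ChartedSpace H M, @IsManifold ℝ _ E' _ _ H _ I ((⊤ : ℕ∞) : WithTop ℕ∞) M _ cs := by
  letI cs : ChartedSpace H M :=
    ⟨∅, fun x => isEmptyElim x, fun x => isEmptyElim x, fun x => isEmptyElim x⟩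
  exact ⟨cs, isManifold_of_contDiffOn I _ M (fun e _ he _ => absurd he (Set.notMem_empty e))⟩

theorem dim_eq (k b : ℕ) :
    finrank ℝ (Fin (k + 2) → EuclideanSpace ℝ (Fin (b + 2))) =
      finrank ℝ ((Fin (k + 2) → ℝ) × EuclideanSpace ℝ (Fin (b + 2))) +
        ((k + 2 - 1) * (b + 2 - 1) - 1) := by
  rw [Module.finrank_prod, Module.finrank_pi, finrank_euclideanSpace_fin, Fintype.card_fin,
    Module.finrank_pi_fintype]
  simp only [finrank_euclideanSpace_fin, Finset.sum_const, Finset.card_univ, Fintype.card_fin,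
    smul_eq_mul]
  have h1 : k + 2 - 1 = k + 1 := rfl
  have h2 : b + 2 - 1 = b + 1 := rfl
  rw [h1, h2]
  have h3 : (k + 1) * (b + 1) = k * b + k + b + 1 := by ring
  rw [h3, Nat.add_sub_cancel]
  ring

end ChainProof


end RegularValueMachinery

noncomputable section Statement
/-! ## STATEMENT 3

For a generic length-vector `ℓ ∈ ℝ_{>0}^n` and `d ≥ 2`, the chain space `Ch_d^n(ℓ)`
is a smooth closed manifold of dimension `(n-2)(d-1) - 1`: it is compact and
carries a smooth manifold structure modelled on `ℝ^{(n-2)(d-1)-1}` (without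
boundary).  (The paper's `n` is `n + 1` below, so the dimension is
`(n-1)(d-1) - 1`.) -/
open scoped Manifold in
theorem chainSpace_is_smooth_closed_manifold (d n : ℕ) (hd : 2 ≤ d)
    (ℓ : Fin (n + 1) → ℝ) (hpos : LengthVectorPos ℓ) (hgen : IsGeneric ℓ) :
    CompactSpace (chainSpace d n ℓ) ∧
    ∃ cs : ChartedSpace (EuclideanSpace ℝ (Fin ((n - 1) * (d - 1) - 1)))
        (chainSpace d n ℓ),
      @IsManifold ℝ _
        (EuclideanSpace ℝ (Fin ((n - 1) * (d - 1) - 1))) _ _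
        (EuclideanSpace ℝ (Fin ((n - 1) * (d - 1) - 1))) _
        (𝓡 ((n - 1) * (d - 1) - 1)) ((⊤ : ℕ∞) : WithTop ℕ∞) (chainSpace d n ℓ) _ cs := by
  constructor
  · exact isCompact_iff_compactSpace.1 (ChainProof.chainSpace_isCompact d n ℓ)
  · match n, ℓ, hpos, hgen with
    | 0, ℓ, hpos, hgen =>
      haveI := ChainProof.isEmpty_zero d hd ℓ hpos
      exact ChainProof.empty_manifold _
    | 1, ℓ, hpos, hgen =>
      haveI := ChainProof.isEmpty_one d hd ℓ hpos hgen
      exact ChainProof.empty_manifold _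
    | (k + 2), ℓ, hpos, hgen =>
      obtain ⟨b, rfl⟩ : ∃ b, d = b + 2 := ⟨d - 2, by omega⟩
      rw [ChainProof.preimage_eq (b + 2) (k + 2) ℓ]
      exact RegVal.regular_value_manifold _ (ChainProof.fmap (b + 2) (k + 2) ℓ)
        (ChainProof.cpt (b + 2) (k + 2))
        (ChainProof.fmap_contDiff (b + 2) (k + 2) ℓ)
        (ChainProof.dim_eq k b)
        (fun q hq => ChainProof.fmap_fderiv_surjective (b + 2) (k + 2) ℓ hd hpos hgen q hq)

end Statement
end

section
/- Let ℓ ∈ ℝ_{>0}^n and d ≥ 2. Let 𝕊 = (S^{d-1})^n, F̃_ℓ(ρ) = ∑_{i=1}^n ℓ_i ρ(i), f̃(ρ) = −|F̃_ℓ(ρ)|², and 𝕊' = {ρ ∈ 𝕊 : F̃_ℓ(ρ) ≠ 0}. Then ρ ∈ 𝕊' is a critical point of the restriction f̃' = f̃|_{𝕊'} (i.e. the differential of f̃' at ρ vanishes) if and only if ρ is a collinear configuration, that is ρ(i) = ±ρ(j) for all i, j ∈ {1,…,n}. -/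
noncomputable section Statement
open scoped RealInnerProductSpace

/-- The robot arm map `F̃_ℓ(ρ) = ∑ ℓᵢ ρ(i)` on the ambient space `(ℝ^d)^n`. -/
def robotArm {d m : ℕ} (ℓ : Fin m → ℝ) (ρ : Fin m → EuclideanSpace ℝ (Fin d)) :
    EuclideanSpace ℝ (Fin d) := ∑ i, ℓ i • ρ i

/-- The function `f̃(ρ) = -|F̃_ℓ(ρ)|²` on the ambient space. -/
def robotArmNegSq {d m : ℕ} (ℓ : Fin m → ℝ) (ρ : Fin m → EuclideanSpace ℝ (Fin d)) :
    ℝ := -‖robotArm ℓ ρ‖ ^ 2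

/-! ## STATEMENT 6

Let `ℓ ∈ ℝ_{>0}^n` and `d ≥ 2`.  Let `𝕊 = (S^{d-1})^n`,
`F̃_ℓ(ρ) = ∑ᵢ ℓᵢ ρ(i)`, `f̃(ρ) = -|F̃_ℓ(ρ)|²` and `𝕊' = {ρ ∈ 𝕊 ∣ F̃_ℓ(ρ) ≠ 0}`.
Then `ρ ∈ 𝕊'` is a critical point of `f̃' = f̃|_{𝕊'}` if and only if `ρ` is a
collinear configuration, i.e. `ρ(i) = ±ρ(j)` for all `i, j`.

Criticality is expressed as usual for a function restricted to a (product of spheres)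
submanifold of euclidean space: the ambient differential of `f̃` at `ρ` vanishes on
the tangent space `{v ∣ ⟨v i, ρ i⟩ = 0 for all i}` of `𝕊` at `ρ` (which is meaningful
since `𝕊'` is open in `𝕊`). -/
theorem critical_points_of_robot_arm_are_collinear (d m : ℕ) (hd : 2 ≤ d)
    (ℓ : Fin m → ℝ) (hpos : LengthVectorPos ℓ)
    (ρ : Fin m → EuclideanSpace ℝ (Fin d))
    (hρ : ∀ i, ‖ρ i‖ = 1) (hne : robotArm ℓ ρ ≠ 0) :
    (∀ v : Fin m → EuclideanSpace ℝ (Fin d),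
        (∀ i, ⟪v i, ρ i⟫ = 0) → fderiv ℝ (robotArmNegSq ℓ) ρ v = 0)
      ↔ (∀ i j, ρ i = ρ j ∨ ρ i = -ρ j) := by
  classical
  set L : (Fin m → EuclideanSpace ℝ (Fin d)) →L[ℝ] EuclideanSpace ℝ (Fin d) :=
    ∑ i : Fin m,
      (ℓ i) • ((ContinuousLinearMap.proj i :
        (Fin m → EuclideanSpace ℝ (Fin d)) →L[ℝ] EuclideanSpace ℝ (Fin d))) with hLdef
  have hL : ∀ x, L x = robotArm ℓ x := by
    intro x
    simp [hLdef, robotArm, ContinuousLinearMap.sum_apply]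
  have hfun : robotArmNegSq ℓ
      = fun x : Fin m → EuclideanSpace ℝ (Fin d) => -⟪L x, L x⟫ := by
    funext x
    rw [robotArmNegSq, hL, real_inner_self_eq_norm_sq]
  have hder : HasFDerivAt (robotArmNegSq ℓ)
      (-(fderivInnerCLM ℝ (L ρ, L ρ)).comp (L.prod L)) ρ := by
    rw [hfun]
    exact (L.hasFDerivAt.inner ℝ L.hasFDerivAt).neg
  have hfd : ∀ v, fderiv ℝ (robotArmNegSq ℓ) ρ v = -(2 * ⟪robotArm ℓ ρ, L v⟫) := by
    intro v
    rw [hder.fderiv]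
    simp only [ContinuousLinearMap.neg_apply, ContinuousLinearMap.comp_apply,
      ContinuousLinearMap.prod_apply, fderivInnerCLM_apply, ← hL]
    rw [real_inner_comm (L v) (L ρ)]
    ring
  constructor
  · intro hcrit
    have key : ∀ k, ∃ c : ℝ, robotArm ℓ ρ = c • ρ k := by
      intro k
      have horth : ∀ w : EuclideanSpace ℝ (Fin d),
          ⟪w, ρ k⟫ = 0 → ⟪robotArm ℓ ρ, w⟫ = 0 := by
        intro w hw
        have hv := hcrit (fun j => if j = k then w else 0) (by
          intro i
          by_cases h : i = k
          · subst h; simpa using hw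
          · simp [h])
        rw [hfd] at hv
        have hLv : L (fun j => if j = k then w else 0) = ℓ k • w := by
          rw [hL, robotArm]
          rw [Finset.sum_eq_single k]
          · simp
          · intro b _ hb; simp [hb]
          · intro hb; exact absurd (Finset.mem_univ k) hb
        rw [hLv, real_inner_smul_right] at hv
        have hk := hpos k
        have : ℓ k * ⟪robotArm ℓ ρ, w⟫ = 0 := by linarith
        rcases mul_eq_zero.mp this with h | h
        · exact absurd h (ne_of_gt hk)
        · exact h
      have hmem : robotArm ℓ ρ ∈ (Submodule.span ℝ {ρ k}) := by
        rw [← Submodule.orthogonal_orthogonal (Submodule.span ℝ {ρ k})]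
        rw [Submodule.mem_orthogonal]
        intro u hu
        have hu' : ⟪ρ k, u⟫ = 0 :=
          Submodule.mem_orthogonal_singleton_iff_inner_right.mp hu
        have : ⟪u, ρ k⟫ = 0 := by rw [real_inner_comm]; exact hu'
        rw [real_inner_comm]
        exact horth u this
      rcases Submodule.mem_span_singleton.mp hmem with ⟨c, hc⟩
      exact ⟨c, hc.symm⟩
    intro i j
    obtain ⟨ci, hci⟩ := key i
    obtain ⟨cj, hcj⟩ := key j
    have hci0 : ci ≠ 0 := by
      intro h; apply hne; rw [hci, h, zero_smul]
    have habs : |ci| = |cj| := by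
      have h1 : ‖robotArm ℓ ρ‖ = |ci| := by
        rw [hci, norm_smul, hρ i, Real.norm_eq_abs, mul_one]
      have h2 : ‖robotArm ℓ ρ‖ = |cj| := by
        rw [hcj, norm_smul, hρ j, Real.norm_eq_abs, mul_one]
      rw [← h1, ← h2]
    have heq : ci • ρ i = cj • ρ j := by rw [← hci, ← hcj]
    rcases abs_eq_abs.mp habs with h | h
    · left
      apply smul_right_injective (EuclideanSpace ℝ (Fin d)) hci0
      show ci • ρ i = ci • ρ j
      rw [heq, h]
    · right
      apply smul_right_injective (EuclideanSpace ℝ (Fin d)) hci0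
      show ci • ρ i = ci • (-ρ j)
      rw [heq, h, smul_neg, neg_smul, neg_neg]
  · intro hcol v hv
    rw [hfd]
    have hFv : ∀ i, ⟪robotArm ℓ ρ, v i⟫ = 0 := by
      intro i
      rw [robotArm, sum_inner]
      apply Finset.sum_eq_zero
      intro j _
      rw [real_inner_smul_left]
      have hvi : ⟪ρ i, v i⟫ = 0 := by rw [real_inner_comm]; exact hv i
      rcases hcol j i with h | h
      · rw [h, hvi, mul_zero]
      · rw [h, inner_neg_left, hvi, neg_zero, mul_zero]
    have hz : ⟪robotArm ℓ ρ, L v⟫ = 0 := by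
      rw [hL, show robotArm ℓ v = ∑ i, ℓ i • v i from rfl, inner_sum]
      apply Finset.sum_eq_zero
      intro i _
      rw [real_inner_smul_right, hFv i, mul_zero]
    rw [hz]
    ring

end Statement
end
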